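/- Let c be a d×d real symmetric matrix with simple eigenvalue λʳ and unit eigenvector qʳ. Then the eigenvector map c ↦ qʳ(c) is differentiable and ∂_{jk} qʳ(c) = (λʳ I_d − c)† (∂_{jk} c) qʳ, where † denotes the Moore–Penrose pseudoinverse; equivalently ∂_{jk} qʳ(c) = Σ_{v≠r} (qᵛⱼ qʳₖ)/(λʳ − λᵛ) · qᵛ. -/

import Mathlib

/-!
Write `c = Q diag(λ) Qᵀ` and `q = Q e_r`. Near `(c, λʳ, q)`, the eigenpairs `(μ, x)` of `A`
normalized by `⟨q, x⟩ = 1` form the level set `F = (0, 1)` of `F(A, μ, x) = (A x - μ x, ⟨q, x⟩)`.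
The partial derivative of `F` in `(μ, x)` is `(μ', x') ↦ ((c - λʳ) x' - μ' q, ⟨q, x'⟩)`. For simple
`λʳ` it is onto, hence invertible: `S = Q diag((λʳ - λᵛ)⁻¹) Qᵀ` satisfies `(λʳ I - c) S = 1 - q qᵀ`
and `Sᵀ q = 0`, so `(-⟨q, y⟩, t q - S y)` is a preimage of `(y, t)`. The implicit function theorem
gives a differentiable eigenpair with derivative `E ↦ (⟨q, E q⟩, S E q)`, and `S` is the
Moore–Penrose inverse of `λʳ I - c` because `g ↦ Q diag(g) Qᵀ` is an algebra map and `a a⁻¹ a = a`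
in `ℝ`, also for `a = 0`.
-/

open Matrix Filter

attribute [local instance] Matrix.frobeniusNormedAddCommGroup Matrix.frobeniusNormedSpace

/-- The four Penrose conditions characterizing the Moore–Penrose pseudoinverse. -/
def IsMoorePenroseInverse {d : ℕ} (A P : Matrix (Fin d) (Fin d) ℝ) : Prop :=
  A * P * A = A ∧ P * A * P = P ∧ (A * P)ᵀ = A * P ∧ (P * A)ᵀ = P * A

theorem IsMoorePenroseInverse.unique {d : ℕ} {A P P' : Matrix (Fin d) (Fin d) ℝ}
    (hP : IsMoorePenroseInverse A P) (hP' : IsMoorePenroseInverse A P') : P = P' := by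
  obtain ⟨hAPA, hPAP, hAP, hPA⟩ := hP
  obtain ⟨hAP'A, hP'AP', hAP', hP'A⟩ := hP'
  have hAP_eq : A * P = A * P' :=
    calc A * P = A * P' * A * P := by rw [hAP'A]
      _ = (A * P')ᵀ * (A * P)ᵀ := by rw [hAP', hAP, Matrix.mul_assoc (A * P')]
      _ = (A * P * A * P')ᵀ := by rw [← transpose_mul, Matrix.mul_assoc (A * P)]
      _ = A * P' := by rw [hAPA, hAP']
  have hPA_eq : P * A = P' * A :=
    calc P * A = P * (A * P' * A) := by rw [hAP'A]
      _ = (P * A)ᵀ * (P' * A)ᵀ := by rw [hPA, hP'A]; simp only [Matrix.mul_assoc]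
      _ = (P' * (A * P * A))ᵀ := by rw [← transpose_mul]; simp only [Matrix.mul_assoc]
      _ = P' * A := by rw [hAPA, hP'A]
  calc P = P * (A * P) := by rw [← Matrix.mul_assoc, hPAP]
    _ = P' * A * P' := by rw [hAP_eq, ← Matrix.mul_assoc, hPA_eq]
    _ = P' := hP'AP'

theorem ContinuousLinearMap.isInvertible_of_surjective {𝕜 E F : Type*}
    [NontriviallyNormedField 𝕜] [CompleteSpace 𝕜]
    [NormedAddCommGroup E] [NormedSpace 𝕜 E] [FiniteDimensional 𝕜 E]
    [NormedAddCommGroup F] [NormedSpace 𝕜 F] [FiniteDimensional 𝕜 F]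
    (f : E →L[𝕜] F) (hrank : Module.finrank 𝕜 E = Module.finrank 𝕜 F)
    (hf : Function.Surjective f) : f.IsInvertible :=
  ⟨(LinearEquiv.ofBijective (f : E →ₗ[𝕜] F)
    ⟨(LinearMap.injective_iff_surjective_of_finrank_eq_finrank hrank).mpr hf, hf⟩)
      |>.toContinuousLinearEquiv, rfl⟩

section conjDiagonal

variable {n : Type*} [Fintype n] [DecidableEq n] (u : orthogonalGroup n ℝ)

noncomputable def conjDiagonal : (n → ℝ) →ₐ[ℝ] Matrix n n ℝ :=
  (Unitary.conjStarAlgAut ℝ _ u).toAlgEquiv.toAlgHom.comp (diagonalAlgHom ℝ)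

theorem conjDiagonal_apply (g : n → ℝ) : conjDiagonal u g = u.1 * diagonal g * u.1ᵀ := by
  simp [conjDiagonal, star_eq_conjTranspose, conjTranspose_eq_transpose_of_trivial]

theorem transpose_conjDiagonal (g : n → ℝ) : (conjDiagonal u g)ᵀ = conjDiagonal u g := by
  simp [conjDiagonal_apply, Matrix.mul_assoc]

theorem col_dotProduct_col (v w : n) : u.1.col v ⬝ᵥ u.1.col w = if v = w then 1 else 0 := by
  have hu : u.1ᵀ * u.1 = 1 := (mem_orthogonalGroup_iff' n ℝ).mp u.2
  simpa [mul_apply, one_apply, dotProduct] using congrFun (congrFun hu v) w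

theorem conjDiagonal_mulVec (g x : n → ℝ) :
    conjDiagonal u g *ᵥ x = ∑ v, (g v * (u.1.col v ⬝ᵥ x)) • u.1.col v := by
  ext i
  simp only [conjDiagonal_apply, mulVec, dotProduct, mul_apply, transpose_apply,
    Finset.sum_apply, Pi.smul_apply, col_apply, smul_eq_mul, Finset.sum_mul, Finset.mul_sum,
    diagonal_apply, mul_ite, mul_zero, Finset.sum_ite_eq', Finset.mem_univ, if_true]
  rw [Finset.sum_comm]
  exact Finset.sum_congr rfl fun v _ => Finset.sum_congr rfl fun j _ => by ring

theorem conjDiagonal_mulVec_col (g : n → ℝ) (v : n) :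
    conjDiagonal u g *ᵥ u.1.col v = g v • u.1.col v := by
  rw [conjDiagonal_mulVec, Finset.sum_eq_single v] <;> simp_all [col_dotProduct_col]

theorem conjDiagonal_single_mulVec (r : n) (x : n → ℝ) :
    conjDiagonal u (Pi.single r 1) *ᵥ x = (u.1.col r ⬝ᵥ x) • u.1.col r := by
  rw [conjDiagonal_mulVec, Finset.sum_eq_single r] <;> simp_all

variable (lam : n → ℝ) (r : n)

/-- The paper's `(λʳ I - c)†` for `c = conjDiagonal u lam`; the gap at `v = r` inverts to
`0⁻¹ = 0`. -/
noncomputable def reducedResolvent : Matrix n n ℝ := conjDiagonal u (lam r • 1 - lam)⁻¹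

theorem reducedResolvent_mulVec_col_self : reducedResolvent u lam r *ᵥ u.1.col r = 0 := by
  simp [reducedResolvent, conjDiagonal_mulVec_col]

theorem col_dotProduct_reducedResolvent_mulVec (y : n → ℝ) :
    u.1.col r ⬝ᵥ (reducedResolvent u lam r *ᵥ y) = 0 := by
  rw [dotProduct_mulVec, ← mulVec_transpose, reducedResolvent, transpose_conjDiagonal,
    ← reducedResolvent, reducedResolvent_mulVec_col_self, zero_dotProduct]

theorem reducedResolvent_mulVec_eq_sum (x : n → ℝ) :
    reducedResolvent u lam r *ᵥ x = ∑ v ∈ Finset.univ.filter (· ≠ r),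
      ((u.1.col v ⬝ᵥ x) / (lam r - lam v)) • u.1.col v := by
  rw [reducedResolvent, conjDiagonal_mulVec, Finset.sum_filter]
  refine Finset.sum_congr rfl fun v _ => ?_
  split_ifs with h
  · simp [div_eq_inv_mul]
  · simp [not_not.mp h]

variable {lam r}

theorem smul_one_sub_mul_reducedResolvent (hsimple : ∀ v, v ≠ r → lam v ≠ lam r) :
    (lam r • 1 - conjDiagonal u lam) * reducedResolvent u lam r
      = 1 - conjDiagonal u (Pi.single r 1) := by
  have hgap : (lam r • 1 - lam) * (lam r • 1 - lam)⁻¹ = 1 - Pi.single r 1 := by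
    ext v
    by_cases h : v = r
    · simp [h]
    · simp [h, sub_ne_zero.mpr (hsimple v h).symm]
  rw [reducedResolvent, ← map_one (conjDiagonal u), ← map_smul, ← map_sub, ← map_mul, hgap,
    map_sub]

end conjDiagonal

theorem isMoorePenroseInverse_conjDiagonal {d : ℕ} (u : orthogonalGroup (Fin d) ℝ)
    (a : Fin d → ℝ) : IsMoorePenroseInverse (conjDiagonal u a) (conjDiagonal u a⁻¹) := by
  have haa : a * a⁻¹ * a = a := funext fun v => mul_inv_mul_cancel (a v)
  have hinv : a⁻¹ * a * a⁻¹ = a⁻¹ := funext fun v => by simpa using mul_inv_mul_cancel (a v)⁻¹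
  refine ⟨?_, ?_, ?_, ?_⟩ <;> simp only [← map_mul, haa, hinv, transpose_conjDiagonal]

theorem isMoorePenroseInverse_reducedResolvent {d : ℕ} (u : orthogonalGroup (Fin d) ℝ)
    (lam : Fin d → ℝ) (r : Fin d) :
    IsMoorePenroseInverse (lam r • 1 - conjDiagonal u lam) (reducedResolvent u lam r) := by
  have h := isMoorePenroseInverse_conjDiagonal u (lam r • 1 - lam)
  rwa [map_sub, map_smul, map_one] at h

section eigenEquation

variable {n : Type*} [Fintype n]

def eigenEquation (q : n → ℝ) (p : Matrix n n ℝ × ℝ × (n → ℝ)) : (n → ℝ) × ℝ :=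
  (p.1 *ᵥ p.2.2 - p.2.1 • p.2.2, q ⬝ᵥ p.2.2)

theorem hasStrictFDerivAt_eigenEquation (q : n → ℝ) (p : Matrix n n ℝ × ℝ × (n → ℝ)) :
    ∃ D, HasStrictFDerivAt (𝕜 := ℝ) (eigenEquation q) D p ∧
      ∀ h : Matrix n n ℝ × ℝ × (n → ℝ),
        D h = (p.1 *ᵥ h.2.2 + h.1 *ᵥ p.2.2 - (p.2.1 • h.2.2 + h.2.1 • p.2.2), q ⬝ᵥ h.2.2) := by
  let mulVecL : Matrix n n ℝ →L[ℝ] (n → ℝ) →L[ℝ] (n → ℝ) :=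
    LinearMap.toContinuousLinearMap
      (LinearMap.toContinuousLinearMap.toLinearMap ∘ₗ mulVecBilin ℝ ℝ)
  let dotL : (n → ℝ) →L[ℝ] ℝ := LinearMap.toContinuousLinearMap (dotProductBilin ℝ ℝ q)
  have hp := hasStrictFDerivAt_snd (𝕜 := ℝ) (p := p)
  exact ⟨_, ((mulVecL.hasStrictFDerivAt_of_bilinear hasStrictFDerivAt_fst hp.snd).sub
    (hp.fst.smul hp.snd)).prodMk (dotL.hasStrictFDerivAt.comp p hp.snd), fun _ => rfl⟩

variable [DecidableEq n] (u : orthogonalGroup n ℝ) {lam : n → ℝ} {r : n}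

theorem exists_eigenpair_hasStrictFDerivAt (hsimple : ∀ v, v ≠ r → lam v ≠ lam r) :
    ∃ (ψ : Matrix n n ℝ → ℝ × (n → ℝ)) (ψ' : Matrix n n ℝ →L[ℝ] ℝ × (n → ℝ)),
      ψ (conjDiagonal u lam) = (lam r, u.1.col r) ∧
      HasStrictFDerivAt ψ ψ' (conjDiagonal u lam) ∧
      (∀ E, ψ' E = (u.1.col r ⬝ᵥ (E *ᵥ u.1.col r),
        reducedResolvent u lam r *ᵥ (E *ᵥ u.1.col r))) ∧
      ∀ᶠ A in nhds (conjDiagonal u lam), A *ᵥ (ψ A).2 = (ψ A).1 • (ψ A).2 := by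
  set c := conjDiagonal u lam
  set q := u.1.col r
  set S := reducedResolvent u lam r
  obtain ⟨D, hD, hD_apply⟩ := hasStrictFDerivAt_eigenEquation q (c, lam r, q)
  have hcq : c *ᵥ q = lam r • q := conjDiagonal_mulVec_col u lam r
  have hqS (y : n → ℝ) : q ⬝ᵥ (S *ᵥ y) = 0 := col_dotProduct_reducedResolvent_mulVec u lam r y
  have hcS (y : n → ℝ) : c *ᵥ (S *ᵥ y) = lam r • (S *ᵥ y) - y + (q ⬝ᵥ y) • q := by
    have h := congrArg (· *ᵥ y) (smul_one_sub_mul_reducedResolvent u hsimple)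
    simp only [sub_mulVec, ← mulVec_mulVec, smul_mulVec, one_mulVec,
      conjDiagonal_single_mulVec] at h
    linear_combination (norm := module) -h
  have hL_rightInverse (y : n → ℝ) (t : ℝ) :
      (D ∘L .inr ℝ _ _) (-(q ⬝ᵥ y), t • q - S *ᵥ y) = (y, t) := by
    rw [ContinuousLinearMap.comp_apply, ContinuousLinearMap.inr_apply, hD_apply]
    refine Prod.ext ?_ ?_
    · simp only [mulVec_sub, mulVec_smul, hcq, hcS, zero_mulVec, add_zero]
      module
    · simp [dotProduct_sub, hqS, q, col_dotProduct_col]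
  have hL : (D ∘L .inr ℝ _ _).IsInvertible :=
    (D ∘L .inr ℝ _ _).isInvertible_of_surjective (by simp [add_comm])
      fun ⟨y, t⟩ => ⟨_, hL_rightInverse y t⟩
  refine ⟨hD.implicitFunctionOfProdDomain hL, _, ?_,
    hD.hasStrictFDerivAt_implicitFunctionOfProdDomain hL, fun E => ?_, ?_⟩
  · exact (hD.eventually_apply_eq_iff_implicitFunctionOfProdDomain hL).self_of_nhds.mp rfl
  · have hDE : D (ContinuousLinearMap.inl ℝ _ _ E) = (E *ᵥ q, 0) := by
      rw [ContinuousLinearMap.inl_apply, hD_apply]; simp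
    have hL_inv := hL.inverse_apply_eq.mpr (hL_rightInverse (E *ᵥ q) 0).symm
    show -(D ∘L .inr ℝ _ _).inverse (D (ContinuousLinearMap.inl ℝ _ _ E)) = _
    rw [hDE, hL_inv]
    simp
  · filter_upwards [hD.eventually_apply_implicitFunctionOfProdDomain hL] with A hA
    have h := congrArg Prod.fst hA
    simp only [eigenEquation, hcq, sub_self] at h
    exact sub_eq_zero.mp h

end eigenEquation

theorem eigenvector_simple_derivative_general
    (d : ℕ) (c Q : Matrix (Fin d) (Fin d) ℝ) (lam : Fin d → ℝ) (r : Fin d)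
    (hQ : Q ∈ Matrix.orthogonalGroup (Fin d) ℝ)
    (hfact : c = Q * Matrix.diagonal lam * Qᵀ)
    (hsimple : ∀ v : Fin d, v ≠ r → lam v ≠ lam r) :
    ∃ (lamf : Matrix (Fin d) (Fin d) ℝ → ℝ)
      (f : Matrix (Fin d) (Fin d) ℝ → (Fin d → ℝ)),
      DifferentiableAt ℝ lamf c ∧ DifferentiableAt ℝ f c ∧
      lamf c = lam r ∧ (∀ i, f c i = Q i r) ∧
      (∀ᶠ A in nhds c, A.IsSymm → A *ᵥ f A = lamf A • f A) ∧
      (∀ j k : Fin d,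
        (∀ P : Matrix (Fin d) (Fin d) ℝ,
            IsMoorePenroseInverse (lam r • (1 : Matrix (Fin d) (Fin d) ℝ) - c) P →
            fderiv ℝ f c (Matrix.single j k 1)
              = P *ᵥ (Matrix.single j k (1 : ℝ) *ᵥ fun i => Q i r)) ∧
        fderiv ℝ f c (Matrix.single j k 1)
          = ∑ v ∈ Finset.univ.filter (fun v => v ≠ r),
              ((Q j v * Q k r) / (lam r - lam v)) • (fun i => Q i v)) := by
  let u : orthogonalGroup (Fin d) ℝ := ⟨Q, hQ⟩
  obtain rfl : c = conjDiagonal u lam := by rw [hfact, conjDiagonal_apply]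
  obtain ⟨ψ, ψ', hψc, hψ, hψ', hψ_eig⟩ := exists_eigenpair_hasStrictFDerivAt u hsimple
  have hf' (E : Matrix (Fin d) (Fin d) ℝ) : fderiv ℝ (fun A => (ψ A).2) (conjDiagonal u lam) E
      = reducedResolvent u lam r *ᵥ (E *ᵥ Q.col r) :=
    (congrArg (· E) hψ.hasFDerivAt.snd.fderiv).trans (congrArg Prod.snd (hψ' E))
  refine ⟨fun A => (ψ A).1, fun A => (ψ A).2, hψ.differentiableAt.fst, hψ.differentiableAt.snd,
    congrArg Prod.fst hψc, fun i => congrFun (congrArg Prod.snd hψc) i,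
    hψ_eig.mono fun A hA _ => hA, fun j k => ⟨fun P hP => ?_, ?_⟩⟩
  · rw [hf', (isMoorePenroseInverse_reducedResolvent u lam r).unique hP]
    rfl
  · have hE : single j k (1 : ℝ) *ᵥ Q.col r = Pi.single j (Q k r) := by
      rw [single_mulVec, one_mul]; rfl
    rw [hf', reducedResolvent_mulVec_eq_sum]
    simp only [hE, dotProduct_single]
    rfl

/-- For a simple eigenvalue `λʳ` of a symmetric matrix `c` with unit eigenvector `qʳ`,
the eigenvector map is differentiable at `c` with
`∂_{jk} qʳ(c) = (λʳ I − c)† E_{jk} qʳ = Σ_{v≠r} (qᵛⱼ qʳₖ)/(λʳ − λᵛ) qᵛ`. -/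
theorem eigenvector_simple_derivative
    (d : ℕ) (c Q : Matrix (Fin d) (Fin d) ℝ) (lam : Fin d → ℝ) (r : Fin d)
    (hsymm : c.IsSymm)
    (hQ : Q ∈ Matrix.orthogonalGroup (Fin d) ℝ)
    (hfact : c = Q * Matrix.diagonal lam * Qᵀ)
    (hsimple : ∀ v : Fin d, v ≠ r → lam v ≠ lam r) :
    ∃ (lamf : Matrix (Fin d) (Fin d) ℝ → ℝ)
      (f : Matrix (Fin d) (Fin d) ℝ → (Fin d → ℝ)),
      DifferentiableAt ℝ lamf c ∧ DifferentiableAt ℝ f c ∧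
      lamf c = lam r ∧ (∀ i, f c i = Q i r) ∧
      (∀ᶠ A in nhds c, A.IsSymm → A *ᵥ f A = lamf A • f A) ∧
      (∀ j k : Fin d,
        (∀ P : Matrix (Fin d) (Fin d) ℝ,
            IsMoorePenroseInverse (lam r • (1 : Matrix (Fin d) (Fin d) ℝ) - c) P →
            fderiv ℝ f c (Matrix.single j k 1)
              = P *ᵥ (Matrix.single j k (1 : ℝ) *ᵥ fun i => Q i r)) ∧
        fderiv ℝ f c (Matrix.single j k 1)
          = ∑ v ∈ Finset.univ.filter (fun v => v ≠ r),
              ((Q j v * Q k r) / (lam r - lam v)) • (fun i => Q i v)) :=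
  eigenvector_simple_derivative_general d c Q lam r hQ hfact hsimple
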